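/- Let L be a lamination system on S^1 and I ∈ L such that I* is isolated (there is no I*-side sequence of leaves converging to I*). Then there exists a non-leaf gap G of L containing I. -/

import Mathlib

open Set Topology

noncomputable section

/-- Stereographic projection from `1 ∈ S¹`. -/
def sproj (z : Circle) : ℝ := (z : ℂ).im / ((z : ℂ).re - 1)

/-- `(a,b,c)` is a positively oriented triple on `S¹`. -/
def posOri (a b c : Circle) : Prop :=
  a ≠ b ∧ b ≠ c ∧ c ≠ a ∧ sproj (a⁻¹ * b) < sproj (a⁻¹ * c)

/-- The nondegenerate open interval `(u,v)` on `S¹`. -/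
def oInt (u v : Circle) : Set Circle := {p | posOri u p v}

/-- `I` is a nondegenerate open interval on `S¹`. -/
def IsND (I : Set Circle) : Prop := ∃ u v : Circle, u ≠ v ∧ I = oInt u v

/-- The dual interval `I* = (v,u)` of `I = (u,v)`, i.e. the interior of the complement. -/
def dual (I : Set Circle) : Set Circle := interior Iᶜ

/-- The leaf `{I, I*}` lies on `J`. -/
def LiesOn (I J : Set Circle) : Prop := I ⊆ J ∨ dual I ⊆ J

/-- A lamination system on `S¹`. -/
structure LamSys (L : Set (Set Circle)) : Prop where
  nonempty : L.Nonempty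
  nd : ∀ I ∈ L, IsND I
  dualMem : ∀ I ∈ L, dual I ∈ L
  unlinked : ∀ I ∈ L, ∀ J ∈ L, LiesOn I J ∨ LiesOn I (dual J)
  chainUnion : ∀ f : ℕ → Set Circle, (∀ n, f n ∈ L) → (∀ n, f n ⊆ f (n + 1)) →
    IsND (⋃ n, f n) → (⋃ n, f n) ∈ L

/-- The leaf associated to an interval. -/
def leafOf (I : Set Circle) : Set (Set Circle) := {I, dual I}

/-- `liminf` of a sequence of sets. -/
def sLiminf (f : ℕ → Set Circle) : Set Circle := ⋃ k, ⋂ n, ⋂ (_ : k ≤ n), f n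

/-- `limsup` of a sequence of sets. -/
def sLimsup (f : ℕ → Set Circle) : Set Circle := ⋂ k, ⋃ n, ⋃ (_ : k ≤ n), f n

/-- The sequence of intervals converges to `J`. -/
def ConvTo (f : ℕ → Set Circle) (J : Set Circle) : Prop :=
  J ⊆ sLiminf f ∧ sLiminf f ⊆ sLimsup f ∧ sLimsup f ⊆ closure J

/-- A gap of a lamination system. -/
def IsGap (L G : Set (Set Circle)) : Prop :=
  G ⊆ L ∧ (∀ I ∈ G, ∀ J ∈ G, I ≠ J → I ∩ J = ∅) ∧ ∀ I ∈ L, ∃ J ∈ G, LiesOn I J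

/-- A gap which is a leaf. -/
def IsLeafGap (G : Set (Set Circle)) : Prop := ∃ I, G = leafOf I

/-- The vertex (endpoint) set of a gap. -/
def vset (G : Set (Set Circle)) : Set Circle := (⋃₀ G)ᶜ

/-- A very full lamination system: every gap is an ideal polygon (finite vertex set). -/
def VeryFull (L : Set (Set Circle)) : Prop := ∀ G, IsGap L G → (vset G).Finite

/-- The set of endpoints of leaves of `L`. -/
def ELset (L : Set (Set Circle)) : Set Circle := ⋃ I ∈ L, frontier I

/-- A rainbow at `p`. -/
def Rainbow (L : Set (Set Circle)) (p : Circle) (f : ℕ → Set Circle) : Prop :=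
  (∀ n, f n ∈ L) ∧ (∀ n, f (n + 1) ⊆ f n) ∧ (⋂ n, f n) = {p}

/-- An `I`-side sequence of leaves. -/
def SideSeq (L : Set (Set Circle)) (I : Set Circle) (f : ℕ → Set Circle) : Prop :=
  (∀ n, f n ∈ L) ∧ (∀ n, I ∉ leafOf (f n)) ∧ (∀ n, LiesOn (f n) I) ∧ ConvTo f I

/-- `I` is isolated in `L`. -/
def IsolatedInt (L : Set (Set Circle)) (I : Set Circle) : Prop := ∀ f, ¬ SideSeq L I f

/-- `C_p^I`. -/
def Cset (L : Set (Set Circle)) (p : Circle) (I : Set Circle) : Set (Set Circle) :=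
  {J ∈ L | p ∈ J ∧ J ⊆ I}

/-- The group of self-homeomorphisms of the circle (composition as multiplication). -/
instance : Group (Circle ≃ₜ Circle) where
  mul g h := h.trans g
  one := Homeomorph.refl _
  inv := Homeomorph.symm
  mul_assoc _ _ _ := Homeomorph.ext fun _ => rfl
  one_mul _ := Homeomorph.ext fun _ => rfl
  mul_one _ := Homeomorph.ext fun _ => rfl
  inv_mul_cancel g := Homeomorph.ext fun x => g.symm_apply_apply x

/-- An orientation-preserving homeomorphism of the circle. -/
def OrientPres (g : Circle ≃ₜ Circle) : Prop :=
  ∀ a b c, posOri a b c → posOri (g a) (g b) (g c)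

/-- `L` is invariant under a subgroup `G` of homeomorphisms. -/
def GInv (G : Subgroup (Circle ≃ₜ Circle)) (L : Set (Set Circle)) : Prop :=
  ∀ g ∈ G, ∀ I ∈ L, (⇑g) '' I ∈ L

/-- The image of a gap under a homeomorphism. -/
def gapIm (g : Circle ≃ₜ Circle) (P : Set (Set Circle)) : Set (Set Circle) :=
  (fun I => (⇑g) '' I) '' P

/-- `v_G(P)`, the union of the vertex sets of the `G`-orbit of the gap `P`. -/
def vOrb (G : Subgroup (Circle ≃ₜ Circle)) (P : Set (Set Circle)) : Set Circle :=
  ⋃ g ∈ G, vset (gapIm g P)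

/-- A loose lamination system: distinct non-leaf gaps have disjoint vertex sets. -/
def Loose (L : Set (Set Circle)) : Prop :=
  ∀ P Q, IsGap L P → IsGap L Q → ¬ IsLeafGap P → ¬ IsLeafGap Q → P ≠ Q →
    vset P ∩ vset Q = ∅

/-- A pseudo-fibered triple `(L₁, L₂, G)`. -/
structure PFib (L₁ L₂ : Set (Set Circle)) (G : Subgroup (Circle ≃ₜ Circle)) : Prop where
  orient : ∀ g ∈ G, OrientPres g
  fg : G.FG
  lam₁ : LamSys L₁
  lam₂ : LamSys L₂
  inv₁ : GInv G L₁
  inv₂ : GInv G L₂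
  veryFull₁ : VeryFull L₁
  veryFull₂ : VeryFull L₂
  loose₁ : Loose L₁
  loose₂ : Loose L₂
  disjEnds : ELset L₁ ∩ ELset L₂ = ∅

end

/-!
The gap is `I` together with the maximal intervals of `L` properly contained in `I*`. Two intervals
of `L` inside `I*` that meet are nested: they are unlinked, and neither can contain the dual of the
other, as that dual would contain `I`. Hence the maximal ones are pairwise disjoint, and every leaf
lying on `I*` is `{I, I*}` or lies on one of them. A maximal interval above a given `J ⊂ I*` is
the union of the chain of intervals between `J` and `I*`: second countability makes it an
increasing union of countably many of them, so it belongs to `L`, and it is not `I*`, for then the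
chain would be an `I*`-side sequence converging to `I*`. The gap is not a leaf since `I*` is not
in it.

The facts about arcs are proved in the angular chart `t ↦ exp t * u`, in which `(u, v)` is the
image of `(0, angleDiff u v)`.
-/

open Real

-- `sin t / (cos t - 1) = -cot (t / 2)`, an increasing function of `t ∈ (0, 2π)`
lemma sproj_exp (t : ℝ) : sproj (Circle.exp t) = sin t / (cos t - 1) := by
  rw [sproj, Circle.coe_exp, Complex.exp_ofReal_mul_I_re, Complex.exp_ofReal_mul_I_im]

lemma cos_lt_one_of_mem_Ioo {t : ℝ} (ht : t ∈ Ioo 0 (2 * π)) : cos t < 1 :=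
  (cos_le_one t).lt_of_ne fun h =>
    ht.1.ne' ((cos_eq_one_iff_of_lt_of_lt (by linarith [ht.1, pi_pos]) ht.2).1 h)

lemma strictMonoOn_sproj_exp :
    StrictMonoOn (fun t => sproj (Circle.exp t)) (Ioo 0 (2 * π)) := by
  simp only [sproj_exp]
  have hne : ∀ t ∈ Ioo 0 (2 * π), cos t - 1 ≠ 0 := fun t ht =>
    (sub_neg.2 (cos_lt_one_of_mem_Ioo ht)).ne
  refine strictMonoOn_of_deriv_pos (convex_Ioo _ _)
    (continuous_sin.continuousOn.div (continuous_cos.sub continuous_const).continuousOn hne)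
    fun t ht => ?_
  rw [interior_Ioo] at ht
  have hd : HasDerivAt (fun t => sin t / (cos t - 1)) _ t :=
    (hasDerivAt_sin t).div ((hasDerivAt_cos t).sub_const 1) (hne t ht)
  rw [hd.deriv]
  have := cos_lt_one_of_mem_Ioo ht
  exact div_pos (by nlinarith [sin_sq_add_cos_sq t]) (sq_pos_of_ne_zero (hne t ht))

lemma exp_injOn_Ico_two_pi : InjOn Circle.exp (Ico 0 (2 * π)) :=
  Circle.exp_injOn_Ico (by simp)

lemma posOri_one_exp_exp {s t : ℝ} (hs : s ∈ Ico 0 (2 * π)) (ht : t ∈ Ioo 0 (2 * π)) :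
    posOri 1 (Circle.exp s) (Circle.exp t) ↔ 0 < s ∧ s < t := by
  have hexp : ∀ {r}, r ∈ Ico 0 (2 * π) → (Circle.exp r = 1 ↔ r = 0) := fun hr =>
    ⟨fun h => exp_injOn_Ico_two_pi hr ⟨le_rfl, two_pi_pos⟩ (h.trans Circle.exp_zero.symm),
      fun h => h ▸ Circle.exp_zero⟩
  simp only [posOri, inv_one, one_mul]
  rcases hs.1.eq_or_lt with rfl | hs0
  · simp
  have hs' : s ∈ Ioo 0 (2 * π) := ⟨hs0, hs.2⟩
  refine ⟨fun ⟨_, _, _, h⟩ => ⟨hs0, (strictMonoOn_sproj_exp.lt_iff_lt hs' ht).1 h⟩,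
    fun ⟨_, h⟩ => ⟨?_, ?_, ?_, (strictMonoOn_sproj_exp.lt_iff_lt hs' ht).2 h⟩⟩
  · exact fun h1 => hs0.ne' ((hexp hs).1 h1.symm)
  · exact fun h1 => h.ne (exp_injOn_Ico_two_pi hs (Ioo_subset_Ico_self ht) h1)
  · exact fun h1 => ht.1.ne' ((hexp (Ioo_subset_Ico_self ht)).1 h1)

lemma posOri_mul_right_iff (a b c w : Circle) :
    posOri (a * w) (b * w) (c * w) ↔ posOri a b c := by
  have : ∀ x : Circle, (a * w)⁻¹ * (x * w) = a⁻¹ * x := fun x => by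
    rw [mul_comm, ← div_eq_mul_inv, mul_div_mul_right_eq_div, div_eq_inv_mul]
  simp only [posOri, ne_eq, mul_left_inj, this]

section Arcs

variable {u v w : Circle}

lemma exp_add_mul_mem_oInt_iff {α β δ : ℝ} (hβ : β - α ∈ Ioo 0 (2 * π))
    (hδ : δ ∈ Ico 0 (2 * π)) :
    Circle.exp (α + δ) * w ∈ oInt (Circle.exp α * w) (Circle.exp β * w) ↔
      0 < δ ∧ δ < β - α := by
  have hδ' : Circle.exp (α + δ) * w = Circle.exp δ * (Circle.exp α * w) := by
    rw [Circle.exp_add]; ac_rfl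
  have hβ' : Circle.exp β * w = Circle.exp (β - α) * (Circle.exp α * w) := by
    rw [← mul_assoc, ← Circle.exp_add, sub_add_cancel]
  rw [oInt, mem_ofPred_eq, hδ', hβ', ← posOri_one_exp_exp hδ hβ,
    ← posOri_mul_right_iff 1 _ _ (Circle.exp α * w), one_mul]

lemma oInt_exp_mul {α β : ℝ} (h₀ : α < β) (h₂ : β < α + 2 * π) :
    oInt (Circle.exp α * w) (Circle.exp β * w) = (Circle.exp · * w) '' Ioo α β := by
  have hβ : β - α ∈ Ioo 0 (2 * π) := ⟨by linarith, by linarith⟩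
  refine Subset.antisymm (fun p hp => ?_) ?_
  · set δ := Circle.angleDiff (Circle.exp α * w) p
    have hp' : Circle.exp (α + δ) * w = p := by
      rw [Circle.exp_add, mul_comm (Circle.exp α), mul_assoc, Circle.exp_angleDiff_mul]
    rw [← hp', exp_add_mul_mem_oInt_iff hβ ⟨Circle.angleDiff_nonneg _ _,
      Circle.angleDiff_lt_two_pi _ _⟩] at hp
    exact ⟨α + δ, ⟨by linarith, by linarith⟩, hp'⟩
  · rintro _ ⟨s, hs, rfl⟩
    have hδ : s - α ∈ Ico 0 (2 * π) := ⟨by linarith [hs.1], by linarith [hs.2]⟩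
    have := (exp_add_mul_mem_oInt_iff (w := w) hβ hδ).2
      ⟨by linarith [hs.1], by linarith [hs.2]⟩
    rwa [add_sub_cancel] at this

lemma injOn_exp_mul (u : Circle) : InjOn (Circle.exp · * u) (Ico 0 (2 * π)) :=
  fun _ hs _ ht h => exp_injOn_Ico_two_pi hs ht (mul_right_cancel h)

lemma exp_mul_image_Ico (u : Circle) : (Circle.exp · * u) '' Ico 0 (2 * π) = univ :=
  eq_univ_of_forall fun p => ⟨Circle.angleDiff u p,
    ⟨Circle.angleDiff_nonneg _ _, Circle.angleDiff_lt_two_pi _ _⟩, Circle.exp_angleDiff_mul⟩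

lemma compl_exp_mul_image {S : Set ℝ} (hS : S ⊆ Ico 0 (2 * π)) :
    ((Circle.exp · * u) '' S)ᶜ = (Circle.exp · * u) '' (Ico 0 (2 * π) \ S) := by
  rw [(injOn_exp_mul u).image_sdiff_subset hS, exp_mul_image_Ico, compl_eq_univ_sdiff]

lemma oInt_eq_image (h : u ≠ v) :
    oInt u v = (Circle.exp · * u) '' Ioo 0 (Circle.angleDiff u v) := by
  have := oInt_exp_mul (w := u) (Circle.angleDiff_pos h)
    (by simpa using Circle.angleDiff_lt_two_pi u v)
  rwa [Circle.exp_zero, one_mul, Circle.exp_angleDiff_mul] at this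

lemma oInt_swap_eq_image (h : u ≠ v) :
    oInt v u = (Circle.exp · * u) '' Ioo (Circle.angleDiff u v) (2 * π) := by
  have := oInt_exp_mul (w := u) (Circle.angleDiff_lt_two_pi u v)
    (by linarith [Circle.angleDiff_pos h])
  rwa [Circle.exp_two_pi, one_mul, Circle.exp_angleDiff_mul] at this

lemma closure_oInt (h : u ≠ v) :
    closure (oInt u v) = (Circle.exp · * u) '' Icc 0 (Circle.angleDiff u v) := by
  have hcont : Continuous (Circle.exp · * u) := by fun_prop
  rw [oInt_eq_image h]
  refine Subset.antisymm (closure_minimal (image_mono Ioo_subset_Icc_self)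
    (isCompact_Icc.image hcont).isClosed) ?_
  rw [← closure_Ioo (Circle.angleDiff_pos h).ne]
  exact image_closure_subset_closure_image hcont

lemma dual_oInt (h : u ≠ v) : dual (oInt u v) = oInt v u := by
  have hdiff : Ico 0 (2 * π) \ Icc 0 (Circle.angleDiff u v) =
      Ioo (Circle.angleDiff u v) (2 * π) := by
    have := Circle.angleDiff_nonneg u v
    ext t
    simp only [mem_sdiff, mem_Ico, mem_Icc, mem_Ioo, not_and, not_le]
    constructor
    · exact fun ⟨⟨h0, h2⟩, hn⟩ => ⟨hn h0, h2⟩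
    · exact fun ⟨h1, h2⟩ => ⟨⟨this.trans h1.le, h2⟩, fun _ => h1⟩
  rw [dual, interior_compl, closure_oInt h,
    compl_exp_mul_image (Icc_subset_Ico_right (Circle.angleDiff_lt_two_pi u v)), hdiff,
    oInt_swap_eq_image h]

lemma isOpen_oInt (h : u ≠ v) : IsOpen (oInt u v) := by
  rw [← dual_oInt h.symm]
  exact isOpen_interior

lemma left_mem_closure_oInt (h : u ≠ v) : u ∈ closure (oInt u v) := by
  rw [closure_oInt h]
  exact ⟨0, ⟨le_rfl, Circle.angleDiff_nonneg u v⟩, by simp⟩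

lemma right_mem_closure_oInt (h : u ≠ v) : v ∈ closure (oInt u v) := by
  rw [closure_oInt h]
  exact ⟨_, ⟨Circle.angleDiff_nonneg u v, le_rfl⟩, Circle.exp_angleDiff_mul⟩

end Arcs

lemma disjoint_dual_self (X : Set Circle) : Disjoint (dual X) X :=
  disjoint_compl_left.mono_left interior_subset

lemma dual_anti {X Y : Set Circle} (h : X ⊆ Y) : dual Y ⊆ dual X :=
  interior_mono (compl_subset_compl.2 h)

lemma IsOpen.subset_dual_iff {U X : Set Circle} (hU : IsOpen U) :
    U ⊆ dual X ↔ Disjoint U X := by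
  rw [dual, hU.subset_interior_iff, subset_compl_iff_disjoint_right]

namespace IsND

variable {I J : Set Circle}

lemma isOpen (hI : IsND I) : IsOpen I := by
  obtain ⟨u, v, h, rfl⟩ := hI
  exact isOpen_oInt h

lemma nonempty (hI : IsND I) : I.Nonempty := by
  obtain ⟨u, v, h, rfl⟩ := hI
  rw [oInt_eq_image h]
  exact (nonempty_Ioo.2 (Circle.angleDiff_pos h)).image _

lemma dual_dual (hI : IsND I) : dual (dual I) = I := by
  obtain ⟨u, v, h, rfl⟩ := hI
  rw [dual_oInt h, dual_oInt h.symm]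

lemma exists_eq_image_Ioo_of_subset {a b : Circle} (hab : a ≠ b) (hJ : IsND J)
    (hJab : J ⊆ oInt a b) :
    ∃ α β, 0 ≤ α ∧ α < β ∧ β ≤ Circle.angleDiff a b ∧
      J = (Circle.exp · * a) '' Ioo α β := by
  obtain ⟨x, y, hxy, rfl⟩ := hJ
  have hT := Circle.angleDiff_lt_two_pi a b
  have hcl := closure_mono hJab
  rw [closure_oInt hab] at hcl
  obtain ⟨α, hα, rfl⟩ := hcl (left_mem_closure_oInt hxy)
  obtain ⟨β, hβ, rfl⟩ := hcl (right_mem_closure_oInt hxy)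
  beta_reduce at hxy hJab
  rcases lt_or_ge α β with hαβ | hβα
  · exact ⟨α, β, hα.1, hαβ, hβ.2, oInt_exp_mul hαβ (by linarith [hα.1, hβ.2])⟩
  -- otherwise the arc from `x` to `y` would run through the arc from `b` to `a`
  exfalso
  have hβα : β < α := hβα.lt_of_ne fun h => hxy (by rw [h])
  rw [← Circle.exp_add_two_pi β, oInt_exp_mul (by linarith [hβ.1, hα.2]) (by linarith)] at hJab
  set t := (Circle.angleDiff a b + 2 * π) / 2 with ht
  obtain ⟨s, hs, hst⟩ :
      Circle.exp t * a ∈ (Circle.exp · * a) '' Ioo 0 (Circle.angleDiff a b) := by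
    rw [← oInt_eq_image hab]
    exact hJab ⟨t, ⟨by linarith [hα.2], by linarith [hβ.1]⟩, rfl⟩
  have hst' : s = t :=
    injOn_exp_mul a ⟨hs.1.le, hs.2.trans hT⟩ ⟨by linarith [hs.1, hs.2], by linarith⟩ hst
  linarith [hs.2]

lemma not_subset_dual (hI : IsND I) : ¬ I ⊆ dual I := fun h =>
  hI.nonempty.ne_empty ((disjoint_dual_self I).symm.eq_bot_of_le h)

lemma liesOn_dual_iff (hI : IsND I) : LiesOn (dual I) J ↔ LiesOn I J := by
  rw [LiesOn, LiesOn, hI.dual_dual, or_comm]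

end IsND

lemma isND_iUnion_of_monotone {K : Set Circle} (hK : IsND K) {g : ℕ → Set Circle}
    (hg : Monotone g) (hnd : ∀ n, IsND (g n)) (hgK : ∀ n, g n ⊆ K) : IsND (⋃ n, g n) := by
  obtain ⟨a, b, hab, rfl⟩ := hK
  set T := Circle.angleDiff a b
  have hT : T < 2 * π := Circle.angleDiff_lt_two_pi a b
  choose α β hα hαβ hβ hg_eq using fun n => (hnd n).exists_eq_image_Ioo_of_subset hab (hgK n)
  have hsub : ∀ n, Ioo (α n) (β n) ⊆ Ico 0 (2 * π) := fun n s hs =>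
    ⟨(hα n).trans hs.1.le, hs.2.trans_le ((hβ n).trans hT.le)⟩
  have hIoo_mono : ∀ ⦃n m⦄, n ≤ m → α m ≤ α n ∧ β n ≤ β m := fun n m hnm => by
    have := hg hnm
    rw [hg_eq, hg_eq, (injOn_exp_mul a).image_subset_image_iff (hsub n) (hsub m)] at this
    exact (Ioo_subset_Ioo_iff (hαβ n)).1 this
  have hbdd_α : BddBelow (range α) := ⟨0, forall_mem_range.2 hα⟩
  have hbdd_β : BddAbove (range β) := ⟨T, forall_mem_range.2 hβ⟩
  set A := ⨅ n, α n
  set B := ⨆ n, β n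
  have hA : 0 ≤ A := le_ciInf hα
  have hB : B ≤ T := ciSup_le hβ
  have hAB : A < B := (ciInf_le hbdd_α 0).trans_lt ((hαβ 0).trans_le (le_ciSup hbdd_β 0))
  have hunion : ⋃ n, g n = (Circle.exp · * a) '' Ioo A B := by
    simp_rw [hg_eq, ← image_iUnion]
    rw [iUnion_Ioo_of_mono_of_isGLB_of_isLUB (fun _ _ h => (hIoo_mono h).1)
      (fun _ _ h => (hIoo_mono h).2) (isGLB_ciInf hbdd_α) (isLUB_ciSup hbdd_β)]
  refine ⟨Circle.exp A * a, Circle.exp B * a, fun h => hAB.ne ?_, ?_⟩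
  · exact injOn_exp_mul a ⟨hA, by linarith⟩ ⟨hA.trans hAB.le, by linarith⟩ h
  · rw [hunion, oInt_exp_mul hAB (by linarith)]

lemma convTo_iUnion_of_monotone {f : ℕ → Set Circle} (hf : Monotone f) :
    ConvTo f (⋃ n, f n) := by
  refine ⟨fun x hx => ?_, fun x hx => ?_, fun x hx => subset_closure ?_⟩
  · obtain ⟨k, hk⟩ := mem_iUnion.1 hx
    exact mem_iUnion.2 ⟨k, mem_iInter₂.2 fun n hn => hf hn hk⟩
  · obtain ⟨k₀, hk₀⟩ := mem_iUnion.1 hx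
    exact mem_iInter.2 fun k => mem_iUnion₂.2
      ⟨max k k₀, le_max_left _ _, mem_iInter₂.1 hk₀ _ (le_max_right _ _)⟩
  · obtain ⟨n, -, hn⟩ := mem_iUnion₂.1 (mem_iInter.1 hx 0)
    exact mem_iUnion.2 ⟨n, hn⟩

lemma IsChain.exists_monotone_iUnion_eq {α : Type*} [TopologicalSpace α]
    [SecondCountableTopology α] {C : Set (Set α)} (hC : IsChain (· ⊆ ·) C) (hne : C.Nonempty)
    (hopen : ∀ s ∈ C, IsOpen s) :
    ∃ g : ℕ → Set α, Monotone g ∧ (∀ n, g n ∈ C) ∧ ⋃ n, g n = ⋃₀ C := by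
  obtain ⟨T, hTc, hTC, hTU⟩ := TopologicalSpace.isOpen_sUnion_countable C hopen
  obtain ⟨s₀, hs₀⟩ := hne
  obtain ⟨f, hf⟩ := (hTc.insert s₀).exists_eq_range (insert_nonempty _ _)
  have hfC : ∀ n, f n ∈ C := fun n => insert_subset hs₀ hTC (hf ▸ mem_range_self n)
  -- in a chain, the union of finitely many members is one of them
  have hsupC : ∀ n, partialSups f n ∈ C := by
    intro n
    induction n with
    | zero => simpa using hfC 0
    | succ n ih =>
      rw [← Order.succ_eq_add_one, partialSups_succ, Order.succ_eq_add_one]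
      rcases hC.total ih (hfC (n + 1)) with h | h
      · rw [sup_of_le_right h]
        exact hfC (n + 1)
      · rwa [sup_of_le_left h]
  refine ⟨partialSups f, (partialSups f).monotone, hsupC, ?_⟩
  calc ⋃ n, partialSups f n = ⋃ n, f n := iSup_partialSups_eq f
    _ = ⋃₀ insert s₀ T := by rw [← sUnion_range, hf]
    _ = ⋃₀ C := by
      rw [sUnion_insert, hTU, union_eq_self_of_subset_left (subset_sUnion_of_mem hs₀)]

def properSubintervals (L : Set (Set Circle)) (D : Set Circle) : Set (Set Circle) :=
  {J ∈ L | J ⊆ D ∧ J ≠ D}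

def sideGap (L : Set (Set Circle)) (I : Set Circle) : Set (Set Circle) :=
  insert I {J | Maximal (· ∈ properSubintervals L (dual I)) J}

lemma sideGap_subset {L : Set (Set Circle)} {I : Set Circle} (hI : I ∈ L) :
    sideGap L I ⊆ L := by
  rintro X (rfl | hX)
  exacts [hI, hX.1.1]

namespace LamSys

variable {L : Set (Set Circle)} {I J K : Set Circle}

lemma subset_or_subset_of_subset_dual (hL : LamSys L) (hI : I ∈ L) (hJ : J ∈ L) (hK : K ∈ L)
    (hJI : J ⊆ dual I) (hKI : K ⊆ dual I) (hJK : (J ∩ K).Nonempty) : J ⊆ K ∨ K ⊆ J := by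
  rcases hL.unlinked J hJ K hK with (h | h) | (h | h)
  · exact Or.inl h
  · have hIJ : I ⊆ dual J :=
      (hL.nd I hI).isOpen.subset_dual_iff.2 ((disjoint_dual_self I).symm.mono_right hJI)
    exact absurd (hIJ.trans (h.trans hKI)) (hL.nd I hI).not_subset_dual
  · obtain ⟨p, hpJ, hpK⟩ := hJK
    exact (disjoint_left.1 (disjoint_dual_self K) (h hpJ) hpK).elim
  · right
    simpa only [(hL.nd J hJ).dual_dual, (hL.nd K hK).dual_dual] using dual_anti h

lemma iUnion_ne_of_isolatedInt (hL : LamSys L) {D : Set Circle} (hiso : IsolatedInt L D)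
    {g : ℕ → Set Circle} (hg : Monotone g) (hgD : ∀ n, g n ∈ properSubintervals L D) :
    ⋃ n, g n ≠ D := by
  intro hgU
  refine hiso g ⟨fun n => (hgD n).1, fun n hDn => ?_, fun n => Or.inl (hgD n).2.1,
    hgU ▸ convTo_iUnion_of_monotone hg⟩
  rcases hDn with hDn | hDn
  · exact (hgD n).2.2 hDn.symm
  · exact (hL.nd _ (hgD n).1).not_subset_dual (hDn ▸ (hgD n).2.1)

lemma exists_maximal_properSubinterval (hL : LamSys L) (hI : I ∈ L)
    (hiso : IsolatedInt L (dual I)) (hJ : J ∈ properSubintervals L (dual I)) :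
    ∃ M, J ⊆ M ∧ Maximal (· ∈ properSubintervals L (dual I)) M := by
  set P := properSubintervals L (dual I)
  set C := {K ∈ P | J ⊆ K}
  have hJC : J ∈ C := ⟨hJ, subset_rfl⟩
  have hchain : IsChain (· ⊆ ·) C := fun X hX Y hY _ =>
    hL.subset_or_subset_of_subset_dual hI hX.1.1 hY.1.1 hX.1.2.1 hY.1.2.1
      ((hL.nd J hJ.1).nonempty.mono (subset_inter hX.2 hY.2))
  obtain ⟨g, hg, hgC, hgU⟩ :=
    hchain.exists_monotone_iUnion_eq ⟨J, hJC⟩ fun K hK => (hL.nd K hK.1.1).isOpen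
  have hgND : IsND (⋃ n, g n) := isND_iUnion_of_monotone (hL.nd _ (hL.dualMem I hI)) hg
    (fun n => hL.nd _ (hgC n).1.1) fun n => (hgC n).1.2.1
  have hUP : ⋃₀ C ∈ P := hgU ▸
    ⟨hL.chainUnion g (fun n => (hgC n).1.1) (fun n => hg n.le_succ) hgND,
      iUnion_subset fun n => (hgC n).1.2.1,
      hL.iUnion_ne_of_isolatedInt hiso hg fun n => (hgC n).1⟩
  exact ⟨⋃₀ C, subset_sUnion_of_mem hJC, hUP, fun K hK hUK =>
    subset_sUnion_of_mem ⟨hK, (subset_sUnion_of_mem hJC).trans hUK⟩⟩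

lemma exists_liesOn_of_subset_dual (hL : LamSys L) (hI : I ∈ L) (hiso : IsolatedInt L (dual I))
    (hJ : J ∈ L) (hJI : J ⊆ dual I) : ∃ M ∈ sideGap L I, LiesOn J M := by
  by_cases hJeq : J = dual I
  · refine ⟨I, mem_insert _ _, Or.inr ?_⟩
    rw [hJeq, (hL.nd I hI).dual_dual]
  · obtain ⟨M, hJM, hM⟩ := hL.exists_maximal_properSubinterval hI hiso ⟨hJ, hJI, hJeq⟩
    exact ⟨M, mem_insert_of_mem _ hM, Or.inl hJM⟩

lemma isGap_sideGap (hL : LamSys L) (hI : I ∈ L) (hiso : IsolatedInt L (dual I)) :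
    IsGap L (sideGap L I) := by
  refine ⟨sideGap_subset hI, ?_, fun X hX => ?_⟩
  · rintro M (rfl | hM) N (rfl | hN) hMN
    · exact absurd rfl hMN
    · exact ((disjoint_dual_self M).symm.mono_right hN.1.2.1).inter_eq
    · exact ((disjoint_dual_self N).mono_left hM.1.2.1).inter_eq
    · by_contra hne
      rcases hL.subset_or_subset_of_subset_dual hI hM.1.1 hN.1.1 hM.1.2.1 hN.1.2.1
        (nonempty_iff_ne_empty.2 hne) with h | h
      · exact hMN (subset_antisymm h (hM.2 hN.1 h))
      · exact hMN (subset_antisymm (hN.2 hM.1 h) h)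
  · rcases hL.unlinked X hX I hI with hXI | hX' | hX'
    · exact ⟨I, mem_insert _ _, hXI⟩
    · exact hL.exists_liesOn_of_subset_dual hI hiso hX hX'
    · obtain ⟨M, hM, hXM⟩ := hL.exists_liesOn_of_subset_dual hI hiso (hL.dualMem X hX) hX'
      exact ⟨M, hM, (hL.nd X hX).liesOn_dual_iff.1 hXM⟩

lemma not_isLeafGap_sideGap (hL : LamSys L) (hI : I ∈ L) : ¬ IsLeafGap (sideGap L I) := by
  rintro ⟨W, hW⟩
  have hdualI : dual I ∈ sideGap L I := by
    rcases (hW ▸ mem_insert I _ : I ∈ leafOf W) with rfl | rfl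
    · exact hW ▸ mem_insert_of_mem _ rfl
    · have hW' : W ∈ sideGap L (dual W) := hW ▸ mem_insert W _
      rwa [(hL.nd W (sideGap_subset hI hW')).dual_dual]
  rcases hdualI with h | h
  · exact (hL.nd I hI).not_subset_dual h.symm.subset
  · exact h.1.2.2 rfl

end LamSys

/-- If `I ∈ L` and `I*` is isolated, then `I` belongs to a non-leaf gap of `L`. -/
theorem stmt9 (L : Set (Set Circle)) (hL : LamSys L) (I : Set Circle) (hI : I ∈ L)
    (hiso : IsolatedInt L (dual I)) :
    ∃ G, IsGap L G ∧ ¬ IsLeafGap G ∧ I ∈ G :=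
  ⟨sideGap L I, hL.isGap_sideGap hI hiso, hL.not_isLeafGap_sideGap hI, mem_insert I _⟩
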